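/- arXiv:2401.02822 — 3 statements merged into one kernel-verified Lean document; each statement's English description precedes it below -/
import Mathlib

section
/- Let s ∈ {1,…,d} and let u₁,…,u_s be linearly independent vectors in ℝ^d. Let w ∈ span{u₁,…,u_s} and suppose there exist α, N > 0 with ‖u_j‖ ≤ N and |⟨w, u_j⟩| ≤ α for all j = 1,…,s. Then ‖w‖ ≤ s N^{s−1} α / Vol{u₁|⋯|u_s}, where Vol{u₁|⋯|u_s} denotes the s-dimensional volume of the parallelepiped spanned by u₁,…,u_s (i.e. the square root of the Gram determinant det(⟨u_i,u_j⟩)_{i,j}). -/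
open Real MeasureTheory
open scoped BigOperators

noncomputable section

/-- Euclidean norm on `ℝ^d`. -/
def nrm {d : ℕ} (a : Fin d → ℝ) : ℝ := Real.sqrt (∑ i, a i ^ 2)

/-- Japanese bracket `⟨a⟩ := √(1 + ‖a‖²)` on `ℝ^d`. -/
def jap {d : ℕ} (a : Fin d → ℝ) : ℝ := Real.sqrt (1 + ∑ i, a i ^ 2)

/-- Bracket of a real number: `⟨t⟩ := √(1 + t²)`. -/
def brk (t : ℝ) : ℝ := Real.sqrt (1 + t ^ 2)

/-- Euclidean inner product on `ℝ^d`. -/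
def dotR {d : ℕ} (a b : Fin d → ℝ) : ℝ := ∑ i, a i * b i

/-- Coercion of an integer vector to a real vector. -/
def zr {d : ℕ} (k : Fin d → ℤ) : Fin d → ℝ := fun i => (k i : ℝ)

/-- Partial derivative in the angle variable `φ i` of a function `f φ a`. -/
def pPhi {d : ℕ} (i : Fin d) (f : (Fin d → ℝ) → (Fin d → ℝ) → ℝ) :
    (Fin d → ℝ) → (Fin d → ℝ) → ℝ :=
  fun φ a => fderiv ℝ (fun x => f x a) φ (Pi.single i 1)

/-- Partial derivative in the action variable `a i` of a function `f φ a`. -/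
def pAct {d : ℕ} (i : Fin d) (f : (Fin d → ℝ) → (Fin d → ℝ) → ℝ) :
    (Fin d → ℝ) → (Fin d → ℝ) → ℝ :=
  fun φ a => fderiv ℝ (fun y => f φ y) a (Pi.single i 1)

/-- Iterated partial derivatives in the angles, indexed by a list of directions. -/
def pPhiL {d : ℕ} (L : List (Fin d)) (f : (Fin d → ℝ) → (Fin d → ℝ) → ℝ) :
    (Fin d → ℝ) → (Fin d → ℝ) → ℝ := L.foldr pPhi f

/-- Iterated partial derivatives in the actions, indexed by a list of directions. -/
def pActL {d : ℕ} (L : List (Fin d)) (f : (Fin d → ℝ) → (Fin d → ℝ) → ℝ) :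
    (Fin d → ℝ) → (Fin d → ℝ) → ℝ := L.foldr pAct f

/-- Partial derivative in direction `i` of a function of the actions only (real valued). -/
def pA {d : ℕ} (i : Fin d) (g : (Fin d → ℝ) → ℝ) : (Fin d → ℝ) → ℝ :=
  fun a => fderiv ℝ g a (Pi.single i 1)

/-- Iterated partial derivatives of a function of the actions only (real valued). -/
def pAL {d : ℕ} (L : List (Fin d)) (g : (Fin d → ℝ) → ℝ) : (Fin d → ℝ) → ℝ := L.foldr pA g

/-- Partial derivative in direction `i` of a complex valued function of the actions. -/
def pAC {d : ℕ} (i : Fin d) (g : (Fin d → ℝ) → ℂ) : (Fin d → ℝ) → ℂ :=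
  fun a => fderiv ℝ g a (Pi.single i 1)

/-- Iterated partial derivatives of a complex valued function of the actions. -/
def pALC {d : ℕ} (L : List (Fin d)) (g : (Fin d → ℝ) → ℂ) : (Fin d → ℝ) → ℂ := L.foldr pAC g

/-- `2π`-periodicity in the angle variables: `f` is a function on `𝕋^d × ℝ^d`. -/
def Periodic2 {d : ℕ} (f : (Fin d → ℝ) → (Fin d → ℝ) → ℝ) : Prop :=
  ∀ (φ a : Fin d → ℝ) (k : Fin d → ℤ), f (fun i => φ i + 2 * Real.pi * (k i : ℝ)) a = f φ a

/-- The symbol estimates: for all multi-indices (given as lists of directions)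
`|∂^α_φ ∂^β_a f| ≤ C ⟨a⟩^(m - δ|β|)`. -/
def SymbolBound {d : ℕ} (m δ : ℝ) (f : (Fin d → ℝ) → (Fin d → ℝ) → ℝ) : Prop :=
  ∀ Lφ La : List (Fin d), ∃ C, 0 < C ∧ ∀ φ a,
    |pActL La (pPhiL Lφ f) φ a| ≤ C * jap a ^ (m - δ * (La.length : ℝ))

/-- The symbol class `S^m_δ` on `𝕋^d × ℝ^d`. -/
def IsSymbol {d : ℕ} (m δ : ℝ) (f : (Fin d → ℝ) → (Fin d → ℝ) → ℝ) : Prop :=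
  ContDiff ℝ (⊤ : ℕ∞) (fun p : (Fin d → ℝ) × (Fin d → ℝ) => f p.1 p.2) ∧ Periodic2 f ∧
    SymbolBound m δ f

/-- The remainder class `𝓡^N`: derivatives up to total order 2 decay like `⟨a⟩^(-N)`. -/
def IsRemainder {d : ℕ} (N : ℝ) (f : (Fin d → ℝ) → (Fin d → ℝ) → ℝ) : Prop :=
  ContDiff ℝ (⊤ : ℕ∞) (fun p : (Fin d → ℝ) × (Fin d → ℝ) => f p.1 p.2) ∧ Periodic2 f ∧
    ∀ Lφ La : List (Fin d), Lφ.length + La.length ≤ 2 → ∃ C, 0 < C ∧ ∀ φ a,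
      |pActL La (pPhiL Lφ f) φ a| ≤ C * jap a ^ (-N)

/-- Joint smoothness of a time dependent function on `ℝ × 𝕋^d × ℝ^d`. -/
def TSmooth {d : ℕ} (P : ℝ → (Fin d → ℝ) → (Fin d → ℝ) → ℝ) : Prop :=
  ContDiff ℝ (⊤ : ℕ∞) (fun p : ℝ × (Fin d → ℝ) × (Fin d → ℝ) => P p.1 p.2.1 p.2.2)

/-- `P ∈ C^∞_b(ℝ; S^m_δ)`: smooth in all variables, periodic in the angles, and all the
symbol seminorms of all time derivatives are bounded uniformly in `t`. -/
def CinftyBSymbol {d : ℕ} (m δ : ℝ) (P : ℝ → (Fin d → ℝ) → (Fin d → ℝ) → ℝ) : Prop :=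
  TSmooth P ∧ (∀ t, Periodic2 (P t)) ∧
    ∀ (j : ℕ) (Lφ La : List (Fin d)), ∃ C, 0 < C ∧ ∀ (t : ℝ) (φ a : Fin d → ℝ),
      |pActL La (pPhiL Lφ (fun x y => iteratedDeriv j (fun s => P s x y) t)) φ a| ≤
        C * jap a ^ (m - δ * (La.length : ℝ))

/-- `P ∈ C^∞_b(ℝ; 𝓡^N)`. -/
def CinftyBRemainder {d : ℕ} (N : ℝ) (P : ℝ → (Fin d → ℝ) → (Fin d → ℝ) → ℝ) : Prop :=
  TSmooth P ∧ (∀ t, Periodic2 (P t)) ∧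
    ∀ (j : ℕ) (Lφ La : List (Fin d)), Lφ.length + La.length ≤ 2 →
      ∃ C, 0 < C ∧ ∀ (t : ℝ) (φ a : Fin d → ℝ),
        |pActL La (pPhiL Lφ (fun x y => iteratedDeriv j (fun s => P s x y) t)) φ a| ≤
          C * jap a ^ (-N)

/-- `P ∈ C^∞(ℝ; S^m_δ)`: smooth in all variables, periodic in the angles, and all the
symbol seminorms of all time derivatives are bounded uniformly on compact time intervals. -/
def CtSymbol {d : ℕ} (m δ : ℝ) (P : ℝ → (Fin d → ℝ) → (Fin d → ℝ) → ℝ) : Prop :=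
  TSmooth P ∧ (∀ t, Periodic2 (P t)) ∧
    ∀ (j : ℕ) (Lφ La : List (Fin d)) (T : ℝ), 0 < T → ∃ C, 0 < C ∧
      ∀ (t : ℝ), |t| ≤ T → ∀ (φ a : Fin d → ℝ),
        |pActL La (pPhiL Lφ (fun x y => iteratedDeriv j (fun s => P s x y) t)) φ a| ≤
          C * jap a ^ (m - δ * (La.length : ℝ))

/-- `P ∈ C^∞(ℝ; 𝓡^N)`. -/
def CtRemainder {d : ℕ} (N : ℝ) (P : ℝ → (Fin d → ℝ) → (Fin d → ℝ) → ℝ) : Prop :=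
  TSmooth P ∧ (∀ t, Periodic2 (P t)) ∧
    ∀ (j : ℕ) (Lφ La : List (Fin d)), Lφ.length + La.length ≤ 2 →
      ∀ (T : ℝ), 0 < T → ∃ C, 0 < C ∧ ∀ (t : ℝ), |t| ≤ T → ∀ (φ a : Fin d → ℝ),
        |pActL La (pPhiL Lφ (fun x y => iteratedDeriv j (fun s => P s x y) t)) φ a| ≤
          C * jap a ^ (-N)

/-- Fourier coefficient `f̂_k(a) = (2π)^{-d} ∫_{𝕋^d} f(φ,a) e^{-ik·φ} dφ`. -/
def fCoeff {d : ℕ} (f : (Fin d → ℝ) → (Fin d → ℝ) → ℝ) (k : Fin d → ℤ) (a : Fin d → ℝ) : ℂ :=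
  ((1 / (2 * Real.pi) ^ d : ℝ) : ℂ) *
    ∫ φ in Set.univ.pi fun _ : Fin d => Set.Ioc (0 : ℝ) (2 * Real.pi),
      Complex.exp (-Complex.I * (∑ i, (k i : ℂ) * (φ i : ℂ))) * (f φ a : ℂ)

/-- `a` is resonant with `k`: `|a·k| ≤ ‖a‖^δ ‖k‖` and `‖k‖ ≤ ‖a‖^μ`. -/
def Resonant {d : ℕ} (δ μ : ℝ) (a : Fin d → ℝ) (k : Fin d → ℤ) : Prop :=
  |dotR a (zr k)| ≤ nrm a ^ δ * nrm (zr k) ∧ nrm (zr k) ≤ nrm a ^ μ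

/-- A function is in normal form: for every `k ≠ 0`, every point in the support of the
`k`-th Fourier coefficient is resonant with `k`. -/
def InNormalForm {d : ℕ} (δ μ : ℝ) (f : (Fin d → ℝ) → (Fin d → ℝ) → ℝ) : Prop :=
  ∀ k : Fin d → ℤ, k ≠ 0 → ∀ a : Fin d → ℝ, fCoeff f k a ≠ 0 → Resonant δ μ a k

/-- Poisson bracket `{f;g} = Σ_j (∂f/∂φ_j ∂g/∂a_j − ∂g/∂φ_j ∂f/∂a_j)`. -/
def pois {d : ℕ} (f g : (Fin d → ℝ) → (Fin d → ℝ) → ℝ) : (Fin d → ℝ) → (Fin d → ℝ) → ℝ :=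
  fun φ a => ∑ j, (pPhi j f φ a * pAct j g φ a - pPhi j g φ a * pAct j f φ a)

/-- Iterated Poisson brackets: `f_0 = f`, `f_{l+1} = {f_l; g}`. -/
def poisIter {d : ℕ} (f g : (Fin d → ℝ) → (Fin d → ℝ) → ℝ) :
    ℕ → (Fin d → ℝ) → (Fin d → ℝ) → ℝ
  | 0 => f
  | l + 1 => pois (poisIter f g l) g

/-- The unperturbed Hamiltonian `h₀(a) = Σ_j a_j²/2`. -/
def h0 {d : ℕ} (a : Fin d → ℝ) : ℝ := (∑ j, a j ^ 2) / 2

/-- The Hamiltonian vector field of `g`, at the point `z = (φ, a)`: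
`(∂g/∂a, −∂g/∂φ)`. -/
def hamVF {d : ℕ} (g : (Fin d → ℝ) → (Fin d → ℝ) → ℝ)
    (z : (Fin d → ℝ) × (Fin d → ℝ)) : (Fin d → ℝ) × (Fin d → ℝ) :=
  (fun i => pAct i g z.1 z.2, fun i => -(pPhi i g z.1 z.2))

/-- `(φ, a)` is a (global) solution of the Hamilton equations
`φ̇ = ∂H/∂a`, `ȧ = −∂H/∂φ` of the time dependent Hamiltonian `H t φ a`. -/
def IsHamSol {d : ℕ} (H : ℝ → (Fin d → ℝ) → (Fin d → ℝ) → ℝ) (φ a : ℝ → Fin d → ℝ) : Prop :=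
  ∀ (t : ℝ) (i : Fin d),
    HasDerivAt (fun s => φ s i) (pAct i (H t) (φ t) (a t)) t ∧
    HasDerivAt (fun s => a s i) (-(pPhi i (H t) (φ t) (a t))) t

/-- The standard symplectic form on `ℝ^d × ℝ^d`, with points written as `(φ, a)`. -/
def symp {d : ℕ} (u v : (Fin d → ℝ) × (Fin d → ℝ)) : ℝ := dotR u.2 v.1 - dotR v.2 u.1

/-- A map of the phase space is canonical: its differential preserves the symplectic form. -/
def IsCanonical {d : ℕ}
    (T : (Fin d → ℝ) × (Fin d → ℝ) → (Fin d → ℝ) × (Fin d → ℝ)) : Prop :=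
  ∀ z u v, symp (fderiv ℝ T z u) (fderiv ℝ T z v) = symp u v

/-- A smooth time dependent family of canonical transformations. -/
def IsCanonicalFamily {d : ℕ}
    (T : ℝ → (Fin d → ℝ) × (Fin d → ℝ) → (Fin d → ℝ) × (Fin d → ℝ)) : Prop :=
  ContDiff ℝ (⊤ : ℕ∞) (fun p : ℝ × ((Fin d → ℝ) × (Fin d → ℝ)) => T p.1 p.2) ∧
    (∀ t, Function.Bijective (T t)) ∧ ∀ t, IsCanonical (T t)

/-- The time dependent transformation `T` conjugates the Hamilton equations of `H` to those of
`H'`: in the new coordinates solutions of `H'` are mapped to solutions of `H`. -/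
def Conjugates {d : ℕ} (T : ℝ → (Fin d → ℝ) × (Fin d → ℝ) → (Fin d → ℝ) × (Fin d → ℝ))
    (H H' : ℝ → (Fin d → ℝ) → (Fin d → ℝ) → ℝ) : Prop :=
  ∀ φ' a' : ℝ → Fin d → ℝ, IsHamSol H' φ' a' →
    IsHamSol H (fun t => (T t (φ' t, a' t)).1) (fun t => (T t (φ' t, a' t)).2)

/-! Geometric constructions -/

/-- `δ_s := δ + (s(s−1)/2) μ`. -/
def deltaS (δ μ : ℝ) (s : ℕ) : ℝ := δ + ((s : ℝ) * ((s : ℝ) - 1) / 2) * μ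

/-- The real span `M_ℝ` of a subgroup `M ⊆ ℤ^d`. -/
def MrealSet {d : ℕ} (M : Submodule ℤ (Fin d → ℤ)) : Submodule ℝ (Fin d → ℝ) :=
  Submodule.span ℝ (zr '' (M : Set (Fin d → ℤ)))

/-- `M` is a module: a subgroup of `ℤ^d` with `ℤ^d ∩ span_ℝ M = M`. -/
def IsZMod {d : ℕ} (M : Submodule ℤ (Fin d → ℤ)) : Prop :=
  ∀ k : Fin d → ℤ, zr k ∈ MrealSet M → k ∈ M

/-- The dimension of a module `M ⊆ ℤ^d`. -/
def dimM {d : ℕ} (M : Submodule ℤ (Fin d → ℤ)) : ℕ := Module.finrank ℝ (MrealSet M)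

/-- Resonant zones `𝒵^{(s)}_M`.  For `s = 0` (and `M = {0}`) it is the nonresonant zone. -/
def zone (δ μ : ℝ) (C D : ℕ → ℝ) (R : ℝ) {d : ℕ} (s : ℕ)
    (M : Submodule ℤ (Fin d → ℤ)) : Set (Fin d → ℝ) :=
  if s = 0 then
    {a | nrm a < R ∨ ∀ k : Fin d → ℤ, k ≠ 0 → nrm (zr k) ≤ nrm a ^ μ →
      nrm (zr k) * nrm a ^ δ ≤ |dotR a (zr k)|}
  else
    {a | R ≤ nrm a ∧ ∃ k : Fin s → Fin d → ℤ, (∀ j, k j ∈ M) ∧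
      (LinearIndependent ℝ fun j => zr (k j)) ∧
      ∀ j : Fin s,
        |dotR a (zr (k j))| ≤ C ((j : ℕ) + 1) * nrm (zr (k j)) * nrm a ^ deltaS δ μ ((j : ℕ) + 1) ∧
        nrm (zr (k j)) ≤ D ((j : ℕ) + 1) * nrm a ^ μ}

/-- Auxiliary downward recursion for the resonant blocks: `blockAux n M` is the block of the
module `M`, thought of as having dimension `d − n`. -/
def blockAux (δ μ : ℝ) (C D : ℕ → ℝ) (R : ℝ) (d : ℕ) :
    ℕ → Submodule ℤ (Fin d → ℤ) → Set (Fin d → ℝ)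
  | 0, M => zone δ μ C D R d M
  | n + 1, M =>
      zone δ μ C D R (d - (n + 1)) M \
        ⋃ (m : Fin (n + 1)) (M' : Submodule ℤ (Fin d → ℤ))
          (_ : IsZMod M' ∧ dimM M' = d - (m : ℕ)), blockAux δ μ C D R d m M'
  termination_by n => n
  decreasing_by exact m.isLt

/-- The resonant block `𝓑^{(s)}_M`. -/
def block (δ μ : ℝ) (C D : ℕ → ℝ) (R : ℝ) {d : ℕ} (s : ℕ)
    (M : Submodule ℤ (Fin d → ℤ)) : Set (Fin d → ℝ) :=
  blockAux δ μ C D R d (d - s) M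

/-- The extended block `E^{(s)}_M`, defined by recursion on the dimension `s`. -/
def extBlock (δ μ : ℝ) (C D : ℕ → ℝ) (R : ℝ) (d : ℕ) :
    ℕ → Submodule ℤ (Fin d → ℤ) → Set (Fin d → ℝ)
  | 0, M =>
      {x | ∃ p ∈ block δ μ C D R 0 M, ∃ q ∈ MrealSet M, x = p + q} ∩ zone δ μ C D R 0 M
  | s + 1, M =>
      ({x | ∃ p ∈ block δ μ C D R (s + 1) M, ∃ q ∈ MrealSet M, x = p + q} ∩
          zone δ μ C D R (s + 1) M) \
        ⋃ (s' : Fin (s + 1)) (M' : Submodule ℤ (Fin d → ℤ))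
          (_ : IsZMod M' ∧ dimM M' = (s' : ℕ)), extBlock δ μ C D R d s' M'
  termination_by s => s
  decreasing_by exact s'.isLt

/-- The fast drift plane `Π^{(s)}_M(p) = (p + M_ℝ) ∩ 𝒵^{(s)}_M`. -/
def plane (δ μ : ℝ) (C D : ℕ → ℝ) (R : ℝ) {d : ℕ} (s : ℕ)
    (M : Submodule ℤ (Fin d → ℤ)) (p : Fin d → ℝ) : Set (Fin d → ℝ) :=
  {x | ∃ q ∈ MrealSet M, x = p + q} ∩ zone δ μ C D R s M

/-- The extended fast drift plane `[Π^{(s)}_M(p)]^{ext}`. -/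
def planeExt (δ μ : ℝ) (C D : ℕ → ℝ) (R : ℝ) {d : ℕ} (s : ℕ)
    (M : Submodule ℤ (Fin d → ℤ)) (p : Fin d → ℝ) : Set (Fin d → ℝ) :=
  ⋃ a' ∈ plane δ μ C D R s M p, {x | nrm (x - a') < nrm a' ^ deltaS δ μ (s + 1)}


open Matrix

section GiorgilliAux

lemma gram_expand {n d : ℕ} (v : Fin n → Fin d → ℝ) (x : Fin n → ℝ) :
    x ⬝ᵥ ((Matrix.of fun i j => v i ⬝ᵥ v j) *ᵥ x) = (∑ i, x i • v i) ⬝ᵥ (∑ j, x j • v j) := by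
  simp only [dotProduct, Matrix.mulVec, Matrix.of_apply, Finset.sum_apply,
    Pi.smul_apply, smul_eq_mul, Finset.sum_mul, Finset.mul_sum]
  rw [show (∑ x_1 : Fin d, ∑ x_2 : Fin n, ∑ i : Fin n, x i * v i x_1 * (x x_2 * v x_2 x_1))
      = ∑ x_2 : Fin n, ∑ i : Fin n, ∑ x_1 : Fin d, x i * v i x_1 * (x x_2 * v x_2 x_1) by
    rw [Finset.sum_comm]
    exact Finset.sum_congr rfl fun _ _ => Finset.sum_comm]
  rw [Finset.sum_comm]
  apply Finset.sum_congr rfl; intro i _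
  apply Finset.sum_congr rfl; intro j _
  apply Finset.sum_congr rfl; intro t _
  ring

lemma gram_posdef {n d : ℕ} (v : Fin n → Fin d → ℝ) (hv : LinearIndependent ℝ v) :
    (Matrix.of fun i j => v i ⬝ᵥ v j).PosDef := by
  rw [Matrix.posDef_iff_dotProduct_mulVec]
  constructor
  · ext i j
    simp [Matrix.conjTranspose, dotProduct_comm]
  · intro x hx
    have hy : (∑ i, x i • v i) ≠ 0 := by
      intro h
      exact hx (funext fun i => Fintype.linearIndependent_iff.mp hv x h i)
    rw [show star x = x from rfl, gram_expand]
    set y := ∑ i, x i • v i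
    obtain ⟨t, ht⟩ := Function.ne_iff.mp hy
    have : (0:ℝ) < ∑ s, y s * y s := by
      apply Finset.sum_pos' (fun s _ => mul_self_nonneg _)
      exact ⟨t, Finset.mem_univ t, mul_self_pos.mpr ht⟩
    exact this

lemma dp_sum_right {n d : ℕ} (u : Fin d → ℝ) (f : Fin n → Fin d → ℝ) :
    u ⬝ᵥ (∑ i, f i) = ∑ i, u ⬝ᵥ f i := by
  simp only [dotProduct, Finset.sum_apply, Finset.mul_sum]
  exact Finset.sum_comm

lemma dp_sum_left {n d : ℕ} (u : Fin d → ℝ) (f : Fin n → Fin d → ℝ) :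
    (∑ i, f i) ⬝ᵥ u = ∑ i, f i ⬝ᵥ u := by
  simp only [dotProduct, Finset.sum_apply, Finset.sum_mul]
  exact Finset.sum_comm

lemma dp_self_nonneg {d : ℕ} (u : Fin d → ℝ) : 0 ≤ u ⬝ᵥ u :=
  Finset.sum_nonneg fun i _ => mul_self_nonneg _

lemma gram_det_le_prod {d : ℕ} : ∀ {n : ℕ} (v : Fin n → Fin d → ℝ),
    LinearIndependent ℝ v →
    (Matrix.of fun i j => v i ⬝ᵥ v j).det ≤ ∏ i, v i ⬝ᵥ v i := by
  intro n
  induction n with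
  | zero => intro v _; simp
  | succ n ih =>
    intro v hv
    set vl := v (Fin.last n) with hvl
    set vc : Fin n → Fin d → ℝ := v ∘ Fin.castSucc with hvcdef
    have hvc_li : LinearIndependent ℝ vc := hv.comp _ (Fin.castSucc_injective n)
    set G : Matrix (Fin (n+1)) (Fin (n+1)) ℝ := Matrix.of fun i j => v i ⬝ᵥ v j with hGdef
    set G' : Matrix (Fin n) (Fin n) ℝ := Matrix.of fun i j => vc i ⬝ᵥ vc j with hG'def
    have hG' : G'.PosDef := gram_posdef vc hvc_li
    have hdet' : IsUnit G'.det := isUnit_iff_ne_zero.mpr (ne_of_gt hG'.det_pos)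
    set b : Fin n → ℝ := fun i => vc i ⬝ᵥ vl with hbdef
    set c : Fin n → ℝ := G'⁻¹ *ᵥ b with hcdef
    have hGc : G' *ᵥ c = b := by
      rw [hcdef, Matrix.mulVec_mulVec, Matrix.mul_nonsing_inv _ hdet', Matrix.one_mulVec]
    set p : Fin d → ℝ := ∑ i, c i • vc i with hpdef
    set q : Fin d → ℝ := vl - p with hqdef
    have hq : ∀ i, vc i ⬝ᵥ q = 0 := by
      intro i
      have h1 : vc i ⬝ᵥ p = (G' *ᵥ c) i := by
        rw [hpdef, dp_sum_right]
        simp only [dotProduct_smul, smul_eq_mul]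
        have h2 : (G' *ᵥ c) i = ∑ j, (vc i ⬝ᵥ vc j) * c j := rfl
        rw [h2]
        exact Finset.sum_congr rfl fun j _ => mul_comm _ _
      rw [hqdef, dotProduct_sub, h1, hGc, sub_self]
    have hq' : ∀ i, q ⬝ᵥ vc i = 0 := fun i => by rw [dotProduct_comm]; exact hq i
    have hq'' : ∀ i : Fin n, q ⬝ᵥ v (Fin.castSucc i) = 0 := fun i => hq' i
    have hqp : q ⬝ᵥ p = 0 := by
      rw [hpdef, dp_sum_right]
      simp only [dotProduct_smul, smul_eq_mul]
      simp [hq']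
    set cc : Fin (n+1) → ℝ := Fin.snoc (fun i => -c i) 1 with hccdef
    have hrow : (∑ k, cc k • G k) = fun j => q ⬝ᵥ v j := by
      funext j
      have h0 : (∑ k, cc k • G k) j = ∑ k, cc k * G k j := by simp
      rw [h0, Fin.sum_univ_castSucc]
      have e2 : cc (Fin.last n) * G (Fin.last n) j = vl ⬝ᵥ v j := by
        simp [hccdef, hGdef, hvl]
      have e1 : ∀ i : Fin n, cc (Fin.castSucc i) * G (Fin.castSucc i) j
          = -(c i * (vc i ⬝ᵥ v j)) := by
        intro i
        simp only [hccdef, Fin.snoc_castSucc, hGdef, Matrix.of_apply, neg_mul]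
        rfl
      have e3 : q ⬝ᵥ v j = vl ⬝ᵥ v j - ∑ i, c i * (vc i ⬝ᵥ v j) := by
        rw [hqdef, sub_dotProduct, hpdef, dp_sum_left]
        simp [smul_dotProduct]
      rw [e2, Finset.sum_congr rfl (fun i _ => e1 i), e3, Finset.sum_neg_distrib]
      ring
    have hdet_eq : (G.updateRow (Fin.last n) (fun j => q ⬝ᵥ v j)).det = G.det := by
      rw [← hrow, Matrix.det_updateRow_sum]
      simp [hccdef]
    set M := G.updateRow (Fin.last n) (fun j => q ⬝ᵥ v j) with hMdef
    have hMlast : ∀ j, M (Fin.last n) j = q ⬝ᵥ v j := fun j => by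
      rw [hMdef, Matrix.updateRow_self]
    have hMsub : M.submatrix (Fin.last n).succAbove (Fin.last n).succAbove = G' := by
      ext i j
      rw [Fin.succAbove_last]
      simp only [Matrix.submatrix_apply, hMdef,
        Matrix.updateRow_ne (Fin.castSucc_lt_last i).ne, hGdef, Matrix.of_apply, hG'def]
      rfl
    have hexp : M.det = (q ⬝ᵥ q) * G'.det := by
      rw [Matrix.det_succ_row M (Fin.last n), Fin.sum_univ_castSucc]
      have h0 : ∀ i : Fin n, (-1:ℝ) ^ ((Fin.last n : ℕ) + ((Fin.castSucc i) : ℕ)) *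
          M (Fin.last n) (Fin.castSucc i) *
          (M.submatrix (Fin.last n).succAbove (Fin.castSucc i).succAbove).det = 0 := by
        intro i
        rw [hMlast, hq'' i, mul_zero, zero_mul]
      rw [Finset.sum_eq_zero fun i _ => h0 i, zero_add, hMlast, hMsub]
      have hql : q ⬝ᵥ v (Fin.last n) = q ⬝ᵥ q := by
        have hv2 : v (Fin.last n) = q + p := by rw [hqdef]; abel
        rw [hv2, dotProduct_add, hqp, add_zero]
      rw [hql]
      have hs : (-1:ℝ) ^ (((Fin.last n) : ℕ) + ((Fin.last n) : ℕ)) = 1 :=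
        Even.neg_one_pow ⟨Fin.last n, rfl⟩
      rw [hs, one_mul]
    have hqvl : q ⬝ᵥ q ≤ vl ⬝ᵥ vl := by
      have hv2 : vl = q + p := by rw [hqdef]; abel
      have h3 : vl ⬝ᵥ vl = q ⬝ᵥ q + p ⬝ᵥ p := by
        rw [hv2, add_dotProduct, dotProduct_add, dotProduct_add, hqp,
          dotProduct_comm p q, hqp]
        ring
      linarith [dp_self_nonneg p]
    calc G.det = M.det := hdet_eq.symm
      _ = (q ⬝ᵥ q) * G'.det := hexp
      _ ≤ (q ⬝ᵥ q) * ∏ i, vc i ⬝ᵥ vc i :=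
          mul_le_mul_of_nonneg_left (ih vc hvc_li) (dp_self_nonneg q)
      _ ≤ (vl ⬝ᵥ vl) * ∏ i, vc i ⬝ᵥ vc i := by
          apply mul_le_mul_of_nonneg_right hqvl
          exact Finset.prod_nonneg fun i _ => dp_self_nonneg _
      _ = ∏ i, v i ⬝ᵥ v i := by
          rw [Fin.prod_univ_castSucc, mul_comm]
          rfl

lemma star_id {n : Type*} (x : n → ℝ) : star x = x := funext fun t => star_trivial _

lemma posdef_quad {n : Type*} [Fintype n] [DecidableEq n] {H : Matrix n n ℝ}
    (hH : H.PosDef) (i j : n) (hij : i ≠ j) (t : ℝ) :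
    0 ≤ H i i * (t * t) + (2 * H i j) * t + H j j := by
  set x : n → ℝ := t • (Pi.single i 1 : n → ℝ) + (Pi.single j 1 : n → ℝ) with hx
  have hx0 : x ≠ 0 := by
    intro h
    have : x j = 0 := by rw [h]; rfl
    rw [hx] at this
    simp [Pi.single_apply, hij] at this
  have hpos := hH.dotProduct_mulVec_pos hx0
  rw [star_id] at hpos
  have hexp : x ⬝ᵥ (H *ᵥ x) = H i i * (t * t) + (2 * H i j) * t + H j j := by
    have hji : H j i = H i j := by
      have := hH.1
      rw [Matrix.IsHermitian] at this
      conv_lhs => rw [← this]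
      rfl
    rw [hx]
    rw [Matrix.mulVec_add, Matrix.mulVec_smul, add_dotProduct,
      smul_dotProduct, dotProduct_add, dotProduct_add,
      dotProduct_smul, dotProduct_smul, Matrix.mulVec_single_one,
      Matrix.mulVec_single_one]
    simp only [single_dotProduct, mul_one, one_mul, smul_eq_mul, Matrix.col_apply]
    rw [hji]
    ring
  rw [hexp] at hpos
  exact hpos.le

lemma posdef_entry_bound {n : Type*} [Fintype n] [DecidableEq n] {H : Matrix n n ℝ}
    (hH : H.PosDef) (i j : n) :
    |H i j| ≤ Real.sqrt (H i i) * Real.sqrt (H j j) := by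
  have hdiag : ∀ k, 0 < H k k := by
    intro k
    have h1 : (Pi.single k 1 : n → ℝ) ≠ 0 := by
      intro h
      have : (Pi.single k 1 : n → ℝ) k = 0 := by rw [h]; rfl
      simp at this
    have := hH.dotProduct_mulVec_pos h1
    rw [star_id] at this
    rw [Matrix.mulVec_single, single_dotProduct] at this
    simpa using this
  by_cases hij : i = j
  · subst hij
    rw [abs_of_pos (hdiag i)]
    conv_lhs => rw [← Real.mul_self_sqrt (hdiag i).le]
  · have hd := discrim_le_zero (posdef_quad hH i j hij)
    rw [discrim] at hd
    have h2 : H i j ^ 2 ≤ H i i * H j j := by nlinarith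
    calc |H i j| = Real.sqrt (H i j ^ 2) := (Real.sqrt_sq_eq_abs _).symm
      _ ≤ Real.sqrt (H i i * H j j) := Real.sqrt_le_sqrt h2
      _ = Real.sqrt (H i i) * Real.sqrt (H j j) := Real.sqrt_mul (hdiag i).le _


lemma nrm_sq {d : ℕ} (x : Fin d → ℝ) : nrm x ^ 2 = x ⬝ᵥ x := by
  have h : (0:ℝ) ≤ ∑ i, x i ^ 2 := Finset.sum_nonneg fun i _ => sq_nonneg _
  rw [nrm, Real.sq_sqrt h]
  simp [dotProduct, pow_two]

end GiorgilliAux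

/-- Lemma 5.7 of Giorgilli, as quoted in the paper: if `u₁,…,u_s` are
linearly independent, `w ∈ span{u₁,…,u_s}`, `‖u_j‖ ≤ N` and `|⟨w,u_j⟩| ≤ α` for all `j`,
then `‖w‖ ≤ s N^{s−1} α / Vol{u₁|⋯|u_s}`. -/
theorem giorgilli_lemma (d s : ℕ) (hs1 : 1 ≤ s) (hsd : s ≤ d)
    (u : Fin s → Fin d → ℝ) (hu : LinearIndependent ℝ u)
    (w : Fin d → ℝ) (hw : w ∈ Submodule.span ℝ (Set.range u))
    (α N : ℝ) (hα : 0 < α) (hN : 0 < N)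
    (hub : ∀ j, nrm (u j) ≤ N) (hwb : ∀ j, |dotR w (u j)| ≤ α) :
    nrm w ≤ (s : ℝ) * N ^ (s - 1) * α /
      Real.sqrt ((Matrix.of fun i j : Fin s => dotR (u i) (u j)).det) := by
  obtain ⟨m, rfl⟩ : ∃ m, s = m + 1 := ⟨s - 1, (Nat.succ_pred_eq_of_pos hs1).symm⟩
  have hGoal : (Matrix.of fun i j : Fin (m+1) => dotR (u i) (u j))
      = Matrix.of fun i j => u i ⬝ᵥ u j := rfl
  rw [hGoal, Nat.add_sub_cancel]
  set G : Matrix (Fin (m+1)) (Fin (m+1)) ℝ := Matrix.of fun i j => u i ⬝ᵥ u j with hGdef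
  have hG : G.PosDef := gram_posdef u hu
  have hdet_pos : 0 < G.det := hG.det_pos
  have hdet_unit : IsUnit G.det := isUnit_iff_ne_zero.mpr (ne_of_gt hdet_pos)
  obtain ⟨c, hc⟩ := (Submodule.mem_span_range_iff_exists_fun ℝ).mp hw
  set b : Fin (m+1) → ℝ := fun i => w ⬝ᵥ u i with hbdef
  have hb : ∀ i, |b i| ≤ α := fun i => hwb i
  have hGc : G *ᵥ c = b := by
    funext i
    have h1 : (G *ᵥ c) i = ∑ j, (u i ⬝ᵥ u j) * c j := rfl
    have h2 : b i = ∑ j, c j * (u j ⬝ᵥ u i) := by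
      show w ⬝ᵥ u i = _
      rw [← hc, dp_sum_left]
      simp only [smul_dotProduct, smul_eq_mul]
    rw [h1, h2]
    exact Finset.sum_congr rfl fun j _ => by rw [dotProduct_comm]; ring
  set H := G⁻¹ with hHdef
  have hH : H.PosDef := hG.inv
  have hcH : c = H *ᵥ b := by
    rw [← hGc, hHdef, Matrix.mulVec_mulVec, Matrix.nonsing_inv_mul _ hdet_unit,
      Matrix.one_mulVec]
  set S : ℝ := ∑ i, Real.sqrt (H i i) with hSdef
  have hS_nonneg : 0 ≤ S := Finset.sum_nonneg fun i _ => Real.sqrt_nonneg _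
  -- bound on diagonal entries of H
  have hub2 : ∀ j, u j ⬝ᵥ u j ≤ N ^ 2 := by
    intro j
    rw [← nrm_sq]
    exact pow_le_pow_left₀ (Real.sqrt_nonneg _) (hub j) 2
  have hdiag : ∀ i, H i i ≤ N ^ (2*m) / G.det := by
    intro i
    have hinv : H i i = G.det⁻¹ * Matrix.adjugate G i i := by
      rw [hHdef, Matrix.inv_def]
      simp
    have hsign : ((-1:ℝ)) ^ ((i:ℕ) + (i:ℕ)) = 1 := Even.neg_one_pow ⟨i, rfl⟩
    have hadj : Matrix.adjugate G i i = (G.submatrix i.succAbove i.succAbove).det := by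
      rw [Matrix.adjugate_fin_succ_eq_det_submatrix, hsign, one_mul]
    have hsub : G.submatrix i.succAbove i.succAbove
        = Matrix.of fun a b => (u ∘ i.succAbove) a ⬝ᵥ (u ∘ i.succAbove) b := rfl
    have hli' : LinearIndependent ℝ (u ∘ i.succAbove) :=
      hu.comp _ (Fin.succAbove_right_injective)
    have hdet_sub : (G.submatrix i.succAbove i.succAbove).det ≤ N ^ (2*m) := by
      rw [hsub]
      calc (Matrix.of fun a b => (u ∘ i.succAbove) a ⬝ᵥ (u ∘ i.succAbove) b).det
          ≤ ∏ a : Fin m, (u ∘ i.succAbove) a ⬝ᵥ (u ∘ i.succAbove) a :=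
            gram_det_le_prod _ hli'
        _ ≤ ∏ _a : Fin m, N ^ 2 :=
            Finset.prod_le_prod (fun a _ => dp_self_nonneg _) (fun a _ => hub2 _)
        _ = N ^ (2*m) := by rw [Finset.prod_const, Finset.card_univ, Fintype.card_fin,
              ← pow_mul, mul_comm]
    rw [hinv, hadj, div_eq_inv_mul]
    exact mul_le_mul_of_nonneg_left hdet_sub (inv_nonneg.mpr hdet_pos.le)
  have hsqrt_diag : ∀ i, Real.sqrt (H i i) ≤ N ^ m / Real.sqrt G.det := by
    intro i
    calc Real.sqrt (H i i) ≤ Real.sqrt (N ^ (2*m) / G.det) := Real.sqrt_le_sqrt (hdiag i)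
      _ = N ^ m / Real.sqrt G.det := by
          rw [show N ^ (2*m) = (N^m)^2 by rw [mul_comm, pow_mul]]
          rw [Real.sqrt_div (sq_nonneg _), Real.sqrt_sq (pow_nonneg hN.le m)]
  have hSum : S ≤ (m+1 : ℝ) * (N ^ m / Real.sqrt G.det) := by
    calc S ≤ ∑ _i : Fin (m+1), N ^ m / Real.sqrt G.det :=
          Finset.sum_le_sum fun i _ => hsqrt_diag i
      _ = (m+1 : ℝ) * (N ^ m / Real.sqrt G.det) := by
          rw [Finset.sum_const, Finset.card_univ, Fintype.card_fin, nsmul_eq_mul]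
          push_cast; ring
  -- bound on |c i|
  have hci : ∀ i, |c i| ≤ α * (Real.sqrt (H i i) * S) := by
    intro i
    have h1 : c i = ∑ j, H i j * b j := by rw [hcH]; rfl
    calc |c i| = |∑ j, H i j * b j| := by rw [h1]
      _ ≤ ∑ j, |H i j * b j| := Finset.abs_sum_le_sum_abs _ _
      _ ≤ ∑ j, (Real.sqrt (H i i) * Real.sqrt (H j j)) * α :=
          Finset.sum_le_sum fun j _ => by
            rw [abs_mul]
            exact mul_le_mul (posdef_entry_bound hH i j) (hb j) (abs_nonneg _)
              (by positivity)
      _ = α * (Real.sqrt (H i i) * S) := by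
          rw [hSdef, Finset.mul_sum, Finset.mul_sum]
          exact Finset.sum_congr rfl fun j _ => by ring
  have hww : w ⬝ᵥ w = ∑ i, c i * b i := by
    nth_rewrite 1 [← hc]
    rw [dp_sum_left]
    simp only [smul_dotProduct, smul_eq_mul]
    refine Finset.sum_congr rfl fun i _ => ?_
    have : b i = u i ⬝ᵥ w := by rw [hbdef]; exact dotProduct_comm _ _
    rw [this]
  have hww_le : w ⬝ᵥ w ≤ (α * S) ^ 2 := by
    calc w ⬝ᵥ w = ∑ i, c i * b i := hww
      _ ≤ ∑ i, (α * (Real.sqrt (H i i) * S)) * α := by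
          apply Finset.sum_le_sum
          intro i _
          calc c i * b i ≤ |c i * b i| := le_abs_self _
            _ = |c i| * |b i| := abs_mul _ _
            _ ≤ (α * (Real.sqrt (H i i) * S)) * α :=
                mul_le_mul (hci i) (hb i) (abs_nonneg _)
                  (by positivity)
      _ = ∑ i, (α ^ 2 * S) * Real.sqrt (H i i) :=
          Finset.sum_congr rfl fun i _ => by ring
      _ = (α ^ 2 * S) * ∑ i, Real.sqrt (H i i) := (Finset.mul_sum _ _ _).symm
      _ = α ^ 2 * S * S := by rw [← hSdef]
      _ = (α * S) ^ 2 := by ring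
  have hfinal : nrm w ≤ α * S := by
    have h1 : nrm w ^ 2 ≤ (α * S) ^ 2 := by rw [nrm_sq]; exact hww_le
    have h2 : 0 ≤ α * S := by positivity
    nlinarith [Real.sqrt_nonneg (∑ i, w i ^ 2), (show 0 ≤ nrm w from Real.sqrt_nonneg _)]
  calc nrm w ≤ α * S := hfinal
    _ ≤ α * ((m+1 : ℝ) * (N ^ m / Real.sqrt G.det)) :=
        mul_le_mul_of_nonneg_left hSum hα.le
    _ = (↑(m+1) : ℝ) * N ^ m * α / Real.sqrt G.det := by push_cast; ring

end
end

section
/- Fix 0 < δ < 1 and μ > 0 with (d(d+1)/2)·μ < 1 − δ, constants 1 = C₁ < C₂ < ⋯ < C_d and 1 = D₁ < D₂ < ⋯ < D_d, and set δ_s := δ + (s(s−1)/2)μ. Then, provided R is large enough, the resonant zone 𝒵^{(d)}_{ℤ^d} is empty; that is, there is no a ∈ ℝ^d with ‖a‖ ≥ R and d linearly independent vectors k₁,…,k_d ∈ ℤ^d such that |a·k_j| ≤ C_j ‖k_j‖ ‖a‖^{δ_j} and ‖k_j‖ ≤ D_j ‖a‖^μ for all j = 1,…,d. -/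
open Real MeasureTheory
open scoped BigOperators

noncomputable section

/-- Hadamard-type bound: determinant bounded by `n!` times the product of row bounds. -/
lemma abs_det_le_fact_mul_prod {n : ℕ} (M : Matrix (Fin n) (Fin n) ℝ) (r : Fin n → ℝ)
    (h : ∀ i j, |M i j| ≤ r i) : |M.det| ≤ (n.factorial : ℝ) * ∏ i, r i := by
  rw [Matrix.det_apply]
  calc |∑ σ : Equiv.Perm (Fin n), Equiv.Perm.sign σ • ∏ i, M (σ i) i|
      ≤ ∑ σ : Equiv.Perm (Fin n), |Equiv.Perm.sign σ • ∏ i, M (σ i) i| :=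
        Finset.abs_sum_le_sum_abs _ _
    _ ≤ ∑ _σ : Equiv.Perm (Fin n), ∏ i, r i := by
        refine Finset.sum_le_sum fun σ _ => ?_
        have h1 : |(Equiv.Perm.sign σ : ℤˣ) • ∏ i, M (σ i) i| = |∏ i, M (σ i) i| := by
          rcases Int.units_eq_one_or (Equiv.Perm.sign σ) with h1 | h1 <;>
            simp [h1, Units.smul_def]
        rw [h1, Finset.abs_prod]
        calc ∏ i, |M (σ i) i| ≤ ∏ i, r (σ i) :=
              Finset.prod_le_prod (fun i _ => abs_nonneg _) (fun i _ => h _ _)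
          _ = ∏ i, r i := Equiv.prod_comp σ r
    _ = (n.factorial : ℝ) * ∏ i, r i := by
        rw [Finset.sum_const, Finset.card_univ, nsmul_eq_mul, Fintype.card_perm,
          Fintype.card_fin]

/-- A chain of strict inequalities on `{1, …, d}` is monotone. -/
lemma chain_mono {d : ℕ} {C : ℕ → ℝ} (hC : ∀ j : ℕ, 1 ≤ j → j < d → C j < C (j + 1)) :
    ∀ i j : ℕ, 1 ≤ i → i ≤ j → j ≤ d → C i ≤ C j := by
  intro i j hi hij hjd
  induction j with
  | zero => omega
  | succ j ih =>
    rcases Nat.lt_or_ge i (j + 1) with hlt | hge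
    · have h1 : C i ≤ C j := ih (by omega) (by omega)
      have h2 : C j < C (j + 1) := hC j (by omega) (by omega)
      linarith
    · have hij' : i = j + 1 := by omega
      rw [hij']

/-- Each coordinate is bounded by the Euclidean norm. -/
lemma abs_le_nrm' {d : ℕ} (x : Fin d → ℝ) (i : Fin d) :
    |x i| ≤ Real.sqrt (∑ j, x j ^ 2) := by
  rw [← Real.sqrt_sq_eq_abs]
  exact Real.sqrt_le_sqrt (Finset.single_le_sum (f := fun j => x j ^ 2)
    (fun j _ => sq_nonneg _) (Finset.mem_univ i))

set_option maxHeartbeats 1600000 in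
/-- Lemma `lemma.bd.1` of the paper: provided `R` is large enough,
the completely resonant zone `𝒵^{(d)}_{ℤ^d}` is empty. -/
theorem complete_resonance_empty (d : ℕ) (hd : 1 ≤ d) (δ μ : ℝ) (C D : ℕ → ℝ)
    (hδ0 : 0 < δ) (hδ1 : δ < 1) (hμ : 0 < μ)
    (hμδ : ((d : ℝ) * ((d : ℝ) + 1) / 2) * μ < 1 - δ)
    (hC1 : C 1 = 1) (hD1 : D 1 = 1)
    (hC : ∀ j : ℕ, 1 ≤ j → j < d → C j < C (j + 1))
    (hD : ∀ j : ℕ, 1 ≤ j → j < d → D j < D (j + 1)) :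
    ∃ R₀ : ℝ, 0 < R₀ ∧ ∀ R : ℝ, R₀ ≤ R →
      zone δ μ C D R d (⊤ : Submodule ℤ (Fin d → ℤ)) = ∅ := by
  have hd0 : d ≠ 0 := by omega
  have hCd : 1 ≤ C d := by have := chain_mono hC 1 d le_rfl hd le_rfl; rwa [hC1] at this
  have hDd : 1 ≤ D d := by have := chain_mono hD 1 d le_rfl hd le_rfl; rwa [hD1] at this
  set e : ℝ := δ + ((d : ℝ) * ((d : ℝ) + 1) / 2) * μ with he
  have he1 : e < 1 := by rw [he]; linarith
  set K : ℝ := Real.sqrt d * ((d : ℝ) * (d.factorial : ℝ) * C d * (D d) ^ d) with hKdef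
  have hK0 : 0 ≤ K := by
    have h1 : (0:ℝ) ≤ (d:ℝ) := Nat.cast_nonneg d
    have h2 : (0:ℝ) ≤ (d.factorial : ℝ) := Nat.cast_nonneg _
    have h3 : (0:ℝ) ≤ (D d) ^ d := pow_nonneg (by linarith) d
    have h4 : (0:ℝ) ≤ Real.sqrt d := Real.sqrt_nonneg _
    exact mul_nonneg h4 (mul_nonneg (mul_nonneg (mul_nonneg h1 h2) (by linarith)) h3)
  refine ⟨max 2 ((K + 1) ^ (1 / (1 - e))), lt_of_lt_of_le two_pos (le_max_left _ _),
    fun R hR => ?_⟩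
  ext a
  simp only [zone, if_neg hd0, Set.mem_setOf_eq, Set.mem_empty_iff_false, iff_false, not_and]
  intro hRa
  rintro ⟨k, -, hli, hk⟩
  set r : ℝ := nrm a with hrdef
  have hr2 : 2 ≤ r := le_trans (le_trans (le_max_left _ _) hR) hRa
  have hr1 : (1:ℝ) ≤ r := by linarith
  have hr0 : (0:ℝ) < r := by linarith
  set b : ℝ := D d * r ^ μ with hbdef
  have hrμ1 : (1:ℝ) ≤ r ^ μ := Real.one_le_rpow hr1 (le_of_lt hμ)
  have hbb : (1:ℝ) ≤ b := by rw [hbdef]; nlinarith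
  have hb0 : (0:ℝ) ≤ b := by linarith
  -- the matrix of resonance vectors
  set B : Matrix (Fin d) (Fin d) ℝ := Matrix.of (fun j i => (k j i : ℝ)) with hB
  have hBunit : IsUnit B := by
    apply Matrix.linearIndependent_rows_iff_isUnit.mp
    exact hli
  have hdetne : B.det ≠ 0 := (Matrix.isUnit_iff_isUnit_det B).mp hBunit |>.ne_zero
  -- determinant is a nonzero integer
  have hdet1 : (1:ℝ) ≤ |B.det| := by
    have hmap : B = (Int.castRingHom ℝ).mapMatrix (Matrix.of (fun j i => k j i)) := by
      ext i j; simp [hB]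
    have hdet : B.det = (((Matrix.of (fun j i => k j i) : Matrix (Fin d) (Fin d) ℤ)).det : ℝ) := by
      rw [hmap, ← RingHom.map_det]; rfl
    have hne : ((Matrix.of (fun j i => k j i) : Matrix (Fin d) (Fin d) ℤ)).det ≠ 0 := by
      intro h0; apply hdetne; rw [hdet, h0]; simp
    have h1 : (1:ℤ) ≤ |((Matrix.of (fun j i => k j i) : Matrix (Fin d) (Fin d) ℤ)).det| :=
      Int.one_le_abs hne
    rw [hdet, ← Int.cast_abs]; exact_mod_cast h1
  -- Cramer-type identity
  have hkey : ∀ i, B.det * a i = ∑ j, B.adjugate i j * dotR a (zr (k j)) := by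
    intro i
    have h1 : (B.adjugate).mulVec (B.mulVec a) = B.det • a := by
      rw [Matrix.mulVec_mulVec, Matrix.adjugate_mul, Matrix.smul_mulVec,
        Matrix.one_mulVec]
    have h2 := congrFun h1 i
    simp only [Matrix.mulVec, dotProduct, Pi.smul_apply, smul_eq_mul] at h2
    rw [← h2]
    refine Finset.sum_congr rfl fun j _ => ?_
    congr 1
    simp only [dotR, zr, hB, Matrix.of_apply]
    exact Finset.sum_congr rfl fun i' _ => mul_comm _ _
  -- entry bounds
  have hnk : ∀ j : Fin d, nrm (zr (k j)) ≤ b := by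
    intro j
    have h1 := (hk j).2
    have hjlt := j.isLt
    have h2 : D ((j:ℕ)+1) ≤ D d := chain_mono hD _ d (by omega) (by omega) le_rfl
    have h3 : (0:ℝ) ≤ r ^ μ := by linarith
    rw [hbdef]; nlinarith
  have hentry : ∀ j i, |B j i| ≤ b := fun j i =>
    le_trans (abs_le_nrm' (zr (k j)) i) (hnk j)
  -- adjugate bound
  have hadj : ∀ i j, |B.adjugate i j| ≤ (d.factorial : ℝ) * b ^ (d - 1) := by
    intro i j
    rw [Matrix.adjugate_apply]
    have hprodeq : (∏ i' : Fin d, (if i' = j then (1:ℝ) else b)) = b ^ (d - 1) := by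
      calc (∏ i' : Fin d, (if i' = j then (1:ℝ) else b))
          = (∏ i' ∈ Finset.univ.erase j, (if i' = j then (1:ℝ) else b)) *
              (if j = j then (1:ℝ) else b) :=
            (Finset.prod_erase_mul _ _ (Finset.mem_univ j)).symm
        _ = ∏ _i' ∈ Finset.univ.erase j, b := by
            rw [if_pos rfl, mul_one]
            exact Finset.prod_congr rfl fun x hx => if_neg (Finset.ne_of_mem_erase hx)
        _ = b ^ (d - 1) := by
            rw [Finset.prod_const, Finset.card_erase_of_mem (Finset.mem_univ j),
              Finset.card_univ, Fintype.card_fin]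
    have hbnd := abs_det_le_fact_mul_prod (B.updateRow j (Pi.single i 1))
      (fun i' => if i' = j then 1 else b) ?_
    · rw [hprodeq] at hbnd
      exact hbnd
    · intro i' j'
      show |(B.updateRow j (Pi.single i 1)) i' j'| ≤ if i' = j then 1 else b
      rcases eq_or_ne i' j with hcase | hcase
      · subst hcase
        rw [Matrix.updateRow_self, if_pos rfl]
        rcases eq_or_ne j' i with h2 | h2 <;> simp [Pi.single_apply, h2]
      · rw [Matrix.updateRow_ne hcase, if_neg hcase]
        exact hentry i' j'
  -- resonance bound
  have hv : ∀ j : Fin d, |dotR a (zr (k j))| ≤ C d * b * r ^ deltaS δ μ d := by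
    intro j
    have h1 := (hk j).1
    have hjlt := j.isLt
    have h2 : C ((j:ℕ)+1) ≤ C d := chain_mono hC _ d (by omega) (by omega) le_rfl
    have h3 : deltaS δ μ ((j:ℕ)+1) ≤ deltaS δ μ d := by
      unfold deltaS
      have hc1 : ((j:ℕ):ℝ) + 1 ≤ (d:ℝ) := by exact_mod_cast hjlt
      have hc2 : (0:ℝ) ≤ ((j:ℕ):ℝ) := Nat.cast_nonneg _
      have hprod : (((j:ℕ):ℝ) + 1) * ((j:ℕ):ℝ) ≤ (d:ℝ) * ((d:ℝ) - 1) :=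
        mul_le_mul hc1 (by linarith) hc2 (by linarith)
      push_cast
      nlinarith [hμ.le]
    have h4 : r ^ deltaS δ μ ((j:ℕ)+1) ≤ r ^ deltaS δ μ d :=
      Real.rpow_le_rpow_of_exponent_le hr1 h3
    have h5 := hnk j
    have hn0 : (0:ℝ) ≤ nrm (zr (k j)) := Real.sqrt_nonneg _
    have h6 : C ((j:ℕ)+1) * nrm (zr (k j)) ≤ C d * b :=
      mul_le_mul h2 h5 hn0 (by linarith)
    calc |dotR a (zr (k j))| ≤ C ((j:ℕ)+1) * nrm (zr (k j)) * r ^ deltaS δ μ ((j:ℕ)+1) := h1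
      _ ≤ C d * b * r ^ deltaS δ μ d := by
          refine mul_le_mul h6 h4 (Real.rpow_nonneg (le_of_lt hr0) _) ?_
          nlinarith
  -- coordinatewise bound
  set A : ℝ := (d:ℝ) * (d.factorial:ℝ) * C d * (D d) ^ d * r ^ e with hA
  have hA0 : 0 ≤ A := by
    have h1 : (0:ℝ) < (d:ℝ) := by exact_mod_cast Nat.pos_of_ne_zero hd0
    have h2 : (0:ℝ) < (d.factorial : ℝ) := by exact_mod_cast d.factorial_pos
    have h3 : (0:ℝ) ≤ (D d) ^ d := pow_nonneg (by linarith) d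
    have h4 : (0:ℝ) ≤ r ^ e := Real.rpow_nonneg (le_of_lt hr0) e
    rw [hA]
    exact mul_nonneg (mul_nonneg (mul_nonneg (mul_nonneg h1.le h2.le) (by linarith)) h3) h4
  have hpowsplit : b ^ (d - 1) * b = b ^ d := by
    rw [← pow_succ]; congr 1; omega
  have hbd : b ^ d = (D d) ^ d * r ^ (μ * (d:ℝ)) := by
    rw [hbdef, mul_pow, ← Real.rpow_natCast (r ^ μ) d, ← Real.rpow_mul (le_of_lt hr0)]
  have hre : r ^ (μ * (d:ℝ)) * r ^ deltaS δ μ d = r ^ e := by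
    rw [← Real.rpow_add hr0]; congr 1; unfold deltaS; rw [he]; ring
  have hai : ∀ i, |a i| ≤ A := by
    intro i
    have h0 : |a i| ≤ |B.det * a i| := by
      rw [abs_mul]; nlinarith [abs_nonneg (a i)]
    rw [hkey i] at h0
    have h7 : |a i| ≤ (d:ℝ) * (((d.factorial:ℝ) * b ^ (d-1)) * (C d * b * r ^ deltaS δ μ d)) := by
      calc |a i| ≤ |∑ j, B.adjugate i j * dotR a (zr (k j))| := h0
        _ ≤ ∑ j, |B.adjugate i j * dotR a (zr (k j))| := Finset.abs_sum_le_sum_abs _ _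
        _ ≤ ∑ _j : Fin d, ((d.factorial:ℝ) * b ^ (d-1)) * (C d * b * r ^ deltaS δ μ d) := by
            refine Finset.sum_le_sum fun j _ => ?_
            rw [abs_mul]
            refine mul_le_mul (hadj i j) (hv j) (abs_nonneg _) ?_
            exact mul_nonneg (Nat.cast_nonneg _) (pow_nonneg hb0 _)
        _ = (d:ℝ) * (((d.factorial:ℝ) * b ^ (d-1)) * (C d * b * r ^ deltaS δ μ d)) := by
            rw [Finset.sum_const, Finset.card_univ, Fintype.card_fin, nsmul_eq_mul]
    refine le_trans h7 (le_of_eq ?_)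
    calc (d:ℝ) * (((d.factorial:ℝ) * b ^ (d-1)) * (C d * b * r ^ deltaS δ μ d))
        = (d:ℝ) * (d.factorial:ℝ) * C d * ((b ^ (d-1) * b) * r ^ deltaS δ μ d) := by ring
      _ = (d:ℝ) * (d.factorial:ℝ) * C d * ((D d) ^ d * (r ^ (μ * (d:ℝ)) * r ^ deltaS δ μ d)) := by
          rw [hpowsplit, hbd]; ring
      _ = A := by rw [hre, hA]; ring
  -- norm bound
  have hfin : r ≤ K * r ^ e := by
    have h2 : (∑ i, a i ^ 2) ≤ (d:ℝ) * A ^ 2 := by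
      calc ∑ i, a i ^ 2 ≤ ∑ _i : Fin d, A ^ 2 := by
            refine Finset.sum_le_sum fun i _ => ?_
            have := hai i
            nlinarith [abs_nonneg (a i), sq_abs (a i)]
        _ = (d:ℝ) * A ^ 2 := by
            rw [Finset.sum_const, Finset.card_univ, Fintype.card_fin, nsmul_eq_mul]
    have h3 : r ≤ Real.sqrt ((d:ℝ) * A ^ 2) := by
      rw [hrdef]; exact Real.sqrt_le_sqrt h2
    rw [Real.sqrt_mul (Nat.cast_nonneg d), Real.sqrt_sq hA0] at h3
    refine le_trans h3 (le_of_eq ?_)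
    rw [hKdef, hA]; ring
  -- contradiction
  have hRb : (K + 1) ^ (1 / (1 - e)) ≤ r := le_trans (le_trans (le_max_right _ _) hR) hRa
  have hKe : K + 1 ≤ r ^ (1 - e) := by
    have h1 : ((K + 1) ^ (1 / (1 - e))) ^ (1 - e) ≤ r ^ (1 - e) :=
      Real.rpow_le_rpow (Real.rpow_nonneg (by linarith) _) hRb (by linarith)
    rwa [← Real.rpow_mul (by linarith : (0:ℝ) ≤ K + 1), one_div,
      inv_mul_cancel₀ (by linarith : (1:ℝ) - e ≠ 0), Real.rpow_one] at h1
  have hre0 : 0 < r ^ e := Real.rpow_pos_of_pos hr0 e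
  have hsplit : r ^ (1 - e) * r ^ e = r := by
    rw [← Real.rpow_add hr0]; simp
  have h2 : (K + 1) * r ^ e ≤ r ^ (1 - e) * r ^ e :=
    mul_le_mul_of_nonneg_right hKe (le_of_lt hre0)
  rw [hsplit] at h2
  nlinarith

end
end

section
/- Fix 0 < δ < 1, μ > 0 with (d(d+1)/2)·μ < 1 − δ, constants 1 = C₁ < ⋯ < C_d, 1 = D₁ < ⋯ < D_d, R large enough, and δ_s := δ + (s(s−1)/2)μ. Let M ⊆ ℤ^d be a module of dimension s and let a belong to the extended block E^{(s)}_M. Then there exist a constant C (independent of a) and a point a' in the resonant block 𝓑^{(s)}_M with ‖a − a'‖ ≤ C ‖a‖^{δ_{s+1}}. -/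
open Real MeasureTheory
open scoped BigOperators

noncomputable section

/-! ### Auxiliary material for the proof of `extended_block_close_to_block` -/

section AuxDistB

open Matrix

abbrev EdA (d : ℕ) := EuclideanSpace ℝ (Fin d)

def eLA (d : ℕ) : (Fin d → ℝ) ≃ₗ[ℝ] EdA d := (WithLp.linearEquiv 2 ℝ (Fin d → ℝ)).symm

lemma eLA_apply {d : ℕ} (a : Fin d → ℝ) (i : Fin d) : eLA d a i = a i := rfl

lemma nrm_nonneg {d : ℕ} (a : Fin d → ℝ) : 0 ≤ nrm a := Real.sqrt_nonneg _

lemma nrm_eqA {d : ℕ} (a : Fin d → ℝ) : nrm a = ‖eLA d a‖ := by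
  rw [EuclideanSpace.norm_eq]
  simp only [nrm, eLA_apply, Real.norm_eq_abs, sq_abs]

lemma dot_eqA {d : ℕ} (a b : Fin d → ℝ) : dotR a b = inner (𝕜 := ℝ) (eLA d a) (eLA d b) := by
  simp [dotR, PiLp.inner_apply, RCLike.inner_apply, eLA_apply]
  exact Finset.sum_congr rfl fun i _ => mul_comm _ _

lemma det_boundA {n : ℕ} (A : Matrix (Fin n) (Fin n) ℝ) (f : Fin n → ℝ)
    (h : ∀ r c, |A r c| ≤ f r) :
    |A.det| ≤ (Nat.factorial n : ℝ) * ∏ r, f r := by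
  rw [Matrix.det_apply']
  calc |∑ σ : Equiv.Perm (Fin n), Equiv.Perm.sign σ * ∏ i, A (σ i) i|
      ≤ ∑ σ : Equiv.Perm (Fin n), |(Equiv.Perm.sign σ : ℝ) * ∏ i, A (σ i) i| :=
        Finset.abs_sum_le_sum_abs _ _
    _ ≤ ∑ _σ : Equiv.Perm (Fin n), ∏ r, f r := by
        apply Finset.sum_le_sum
        intro σ _
        rw [abs_mul]
        have h1 : |(Equiv.Perm.sign σ : ℝ)| = 1 := by
          rcases Int.units_eq_one_or (Equiv.Perm.sign σ) with h' | h' <;> simp [h']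
        rw [h1, one_mul, Finset.abs_prod]
        calc ∏ i, |A (σ i) i| ≤ ∏ i, f (σ i) :=
              Finset.prod_le_prod (fun i _ => abs_nonneg _) (fun i _ => h _ _)
          _ = ∏ r, f r := Equiv.prod_comp σ f
    _ = (Nat.factorial n : ℝ) * ∏ r, f r := by
        rw [Finset.sum_const, Finset.card_univ, Fintype.card_perm, nsmul_eq_mul,
          Fintype.card_fin]

lemma gram_keyA {d s : ℕ} (k : Fin s → Fin d → ℤ)
    (hli : LinearIndependent ℝ (fun j => eLA d (zr (k j))))
    (x : EdA d) (hx : x ∈ Submodule.span ℝ (Set.range (fun j => eLA d (zr (k j)))))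
    (B β : ℝ) (hB : 1 ≤ B) (hβ : 0 ≤ β)
    (hk : ∀ j, ‖eLA d (zr (k j))‖ ≤ B)
    (hb : ∀ j, |inner (𝕜 := ℝ) x (eLA d (zr (k j)))| ≤ β) :
    ‖x‖ ^ 2 ≤ (s : ℝ) ^ 2 * (Nat.factorial s : ℝ) * B ^ (2 * (s - 1)) * β ^ 2 := by
  set v : Fin s → EdA d := fun j => eLA d (zr (k j)) with hv
  have hk' : ∀ j, ‖v j‖ ≤ B := fun j => hk j
  have hb' : ∀ j, |inner (𝕜 := ℝ) x (v j)| ≤ β := fun j => hb j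
  obtain ⟨c, hc⟩ := (Submodule.mem_span_range_iff_exists_fun ℝ).mp hx
  set GZ : Matrix (Fin s) (Fin s) ℤ := Matrix.of fun i j => ∑ l, k i l * k j l with hGZ
  set G : Matrix (Fin s) (Fin s) ℝ := GZ.map (Int.cast : ℤ → ℝ) with hGdef
  have hG : ∀ i j, G i j = inner (𝕜 := ℝ) (v i) (v j) := by
    intro i j
    simp only [hGdef, hGZ, Matrix.map_apply, Matrix.of_apply, PiLp.inner_apply,
      RCLike.inner_apply, conj_trivial]
    push_cast
    exact Finset.sum_congr rfl fun l _ => mul_comm _ _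
  have hdet : G.det ≠ 0 := by
    intro h0
    obtain ⟨c0, hc0ne, hGc0⟩ := (Matrix.exists_mulVec_eq_zero_iff).mpr h0
    have hy : ∀ i, inner (𝕜 := ℝ) (v i) (∑ j, c0 j • v j) = 0 := by
      intro i
      rw [inner_sum]
      have : ∀ j, inner (𝕜 := ℝ) (v i) (c0 j • v j) = G i j * c0 j := by
        intro j; rw [real_inner_smul_right, hG]; ring
      rw [Finset.sum_congr rfl fun j _ => this j]
      have := congrFun hGc0 i
      simpa [Matrix.mulVec, dotProduct] using this
    have hzero : (∑ j, c0 j • v j) = 0 := by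
      have h2 : inner (𝕜 := ℝ) (∑ i, c0 i • v i) (∑ j, c0 j • v j) = 0 := by
        rw [sum_inner]
        refine Finset.sum_eq_zero fun i _ => ?_
        rw [real_inner_smul_left, hy i, mul_zero]
      exact inner_self_eq_zero.mp h2
    have := linearIndependent_iff'.mp hli Finset.univ c0 hzero
    exact hc0ne (funext fun i => this i (Finset.mem_univ i))
  have hdetZ : 1 ≤ |G.det| := by
    have hmap : G.det = ((GZ.det : ℤ) : ℝ) := by
      rw [hGdef]
      exact (RingHom.map_det (Int.castRingHom ℝ) GZ).symm
    have : GZ.det ≠ 0 := by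
      intro h0; rw [hmap, h0] at hdet; exact hdet (by norm_num)
    rw [hmap, ← Int.cast_abs]
    exact_mod_cast Int.one_le_abs this
  set κ : ℝ := (Nat.factorial s : ℝ) * B ^ (2 * (s - 1)) with hκ
  have hκ0 : 0 ≤ κ := by positivity
  have hB0 : (0 : ℝ) < B := lt_of_lt_of_le one_pos hB
  have hGinv : ∀ i j, |G⁻¹ i j| ≤ κ := by
    intro i j
    rw [Matrix.inv_def, Matrix.smul_apply, smul_eq_mul, abs_mul]
    have hRinv : |Ring.inverse G.det| ≤ 1 := by
      rw [Ring.inverse_eq_inv, abs_inv]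
      exact inv_le_one_of_one_le₀ hdetZ
    have hadj : |G.adjugate i j| ≤ κ := by
      rw [Matrix.adjugate_apply]
      have hdb := det_boundA (G.updateRow j (Pi.single i 1))
        (fun r => if r = j then 1 else B ^ 2)
        (fun r c => by
          rw [Matrix.updateRow_apply]
          by_cases hrj : r = j
          · rw [if_pos hrj, if_pos hrj, Pi.single_apply]
            split <;> norm_num
          · rw [if_neg hrj, if_neg hrj, hG]
            refine le_trans (abs_real_inner_le_norm _ _) ?_
            nlinarith [hk' r, hk' c, norm_nonneg (v r), norm_nonneg (v c)])
      have hprod : (∏ r, if r = j then (1 : ℝ) else B ^ 2) = B ^ (2 * (s - 1)) := by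
        rw [← Finset.mul_prod_erase Finset.univ _ (Finset.mem_univ j)]
        rw [if_pos rfl, one_mul]
        rw [Finset.prod_congr rfl (fun r hr => by
          rw [if_neg (Finset.ne_of_mem_erase hr)])]
        rw [Finset.prod_const, Finset.card_erase_of_mem (Finset.mem_univ j),
          Finset.card_univ, Fintype.card_fin, ← pow_mul, Nat.mul_comm]
      rw [hprod] at hdb
      exact hdb
    calc |Ring.inverse G.det| * |G.adjugate i j| ≤ 1 * κ :=
          mul_le_mul hRinv hadj (abs_nonneg _) one_pos.le
      _ = κ := one_mul κ
  set b : Fin s → ℝ := fun j => inner (𝕜 := ℝ) (v j) x with hbdef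
  have hbb : ∀ j, |b j| ≤ β := fun j => by
    rw [hbdef]; dsimp only; rw [real_inner_comm]; exact hb' j
  have hGc : G *ᵥ c = b := by
    funext j
    simp only [Matrix.mulVec, dotProduct]
    rw [hbdef, ← hc]
    dsimp only
    rw [inner_sum]
    refine Finset.sum_congr rfl fun i _ => ?_
    rw [real_inner_smul_right, hG]; ring
  have hceq : c = G⁻¹ *ᵥ b := by
    rw [← hGc, Matrix.mulVec_mulVec, Matrix.nonsing_inv_mul G (Ne.isUnit hdet),
      Matrix.one_mulVec]
  have hcb : ∀ i, |c i| ≤ (s : ℝ) * κ * β := by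
    intro i
    rw [hceq]
    simp only [Matrix.mulVec, dotProduct]
    calc |∑ j, G⁻¹ i j * b j| ≤ ∑ j, |G⁻¹ i j * b j| := Finset.abs_sum_le_sum_abs _ _
      _ ≤ ∑ _j : Fin s, κ * β := by
          refine Finset.sum_le_sum fun j _ => ?_
          rw [abs_mul]
          exact mul_le_mul (hGinv i j) (hbb j) (abs_nonneg _) hκ0
      _ = (s : ℝ) * κ * β := by
          rw [Finset.sum_const, Finset.card_univ, Fintype.card_fin, nsmul_eq_mul]; ring
  have hx2 : ‖x‖ ^ 2 = ∑ i, c i * inner (𝕜 := ℝ) x (v i) := by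
    rw [← real_inner_self_eq_norm_sq]
    calc inner (𝕜 := ℝ) x x = inner (𝕜 := ℝ) x (∑ i, c i • v i) := by rw [hc]
      _ = ∑ i, c i * inner (𝕜 := ℝ) x (v i) := by
          rw [inner_sum]
          exact Finset.sum_congr rfl fun i _ => real_inner_smul_right _ _ _
  calc ‖x‖ ^ 2 = ∑ i, c i * inner (𝕜 := ℝ) x (v i) := hx2
    _ ≤ ∑ i, |c i * inner (𝕜 := ℝ) x (v i)| :=
        Finset.sum_le_sum fun i _ => le_abs_self _
    _ ≤ ∑ _i : Fin s, ((s : ℝ) * κ * β) * β := by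
        refine Finset.sum_le_sum fun i _ => ?_
        rw [abs_mul]
        exact mul_le_mul (hcb i) (hb' i) (abs_nonneg _) (by positivity)
    _ = (s : ℝ) ^ 2 * (Nat.factorial s : ℝ) * B ^ (2 * (s - 1)) * β ^ 2 := by
        rw [Finset.sum_const, Finset.card_univ, Fintype.card_fin, nsmul_eq_mul, hκ]; ring

lemma deltaS_monoA (δ μ : ℝ) (hμ : 0 ≤ μ) {m n : ℕ} (hm : 1 ≤ m) (h : m ≤ n) :
    deltaS δ μ m ≤ deltaS δ μ n := by
  unfold deltaS
  have h1 : (m : ℝ) ≤ (n : ℝ) := Nat.cast_le.mpr h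
  have h2 : (1 : ℝ) ≤ (m : ℝ) := by exact_mod_cast hm
  nlinarith [mul_nonneg (mul_nonneg (sub_nonneg.mpr h1)
    (by linarith : (0:ℝ) ≤ (n:ℝ) + (m:ℝ) - 1)) hμ]

lemma cBoundA (C : ℕ → ℝ) (d j : ℕ) (hj : j ≤ d) :
    C j ≤ 1 + ∑ i ∈ Finset.range (d+1), |C i| := by
  have h1 : |C j| ≤ ∑ i ∈ Finset.range (d+1), |C i| :=
    Finset.single_le_sum (f := fun i => |C i|) (fun i _ => abs_nonneg _)
      (Finset.mem_range.mpr (by omega))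
  have h2 := le_abs_self (C j)
  linarith

lemma cOneA (C : ℕ → ℝ) (d : ℕ) : (1:ℝ) ≤ 1 + ∑ i ∈ Finset.range (d+1), |C i| := by
  have : (0:ℝ) ≤ ∑ i ∈ Finset.range (d+1), |C i| :=
    Finset.sum_nonneg fun i _ => abs_nonneg _
  linarith

lemma block_subset_zoneA {d : ℕ} (δ μ : ℝ) (C D : ℕ → ℝ) (R : ℝ) (s : ℕ) (hsd : s ≤ d)
    (M : Submodule ℤ (Fin d → ℤ)) : block δ μ C D R s M ⊆ zone δ μ C D R s M := by
  unfold block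
  cases h : d - s with
  | zero =>
    have hds : s = d := by omega
    rw [blockAux]
    subst hds
    exact subset_rfl
  | succ n =>
    rw [blockAux]
    have hd : d - (n+1) = s := by omega
    rw [hd]
    exact Set.diff_subset

lemma extBlock_subsetA {d : ℕ} (δ μ : ℝ) (C D : ℕ → ℝ) (R : ℝ) (s : ℕ)
    (M : Submodule ℤ (Fin d → ℤ)) :
    extBlock δ μ C D R d s M ⊆
      {x | ∃ p ∈ block δ μ C D R s M, ∃ q ∈ MrealSet M, x = p + q} ∩
        zone δ μ C D R s M := by
  cases s with
  | zero => rw [extBlock]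
  | succ n =>
    rw [extBlock]
    exact Set.diff_subset

lemma span_eqA {d s : ℕ} (M : Submodule ℤ (Fin d → ℤ)) (hdim : dimM M = s)
    (k : Fin s → Fin d → ℤ) (hkM : ∀ j, k j ∈ M)
    (hli : LinearIndependent ℝ fun j => zr (k j)) :
    Submodule.span ℝ (Set.range fun j => zr (k j)) = MrealSet M := by
  have hle : Submodule.span ℝ (Set.range fun j => zr (k j)) ≤ MrealSet M := by
    rw [Submodule.span_le]
    rintro x ⟨j, rfl⟩
    exact Submodule.subset_span ⟨k j, hkM j, rfl⟩
  refine Submodule.eq_of_le_of_finrank_le hle ?_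
  rw [finrank_span_eq_card hli, Fintype.card_fin]
  unfold dimM at hdim
  exact le_of_eq hdim

end AuxDistB

set_option maxHeartbeats 1000000 in
/-- Corollary `distB` of the paper: for `R` large enough, every point of
an extended block `E^{(s)}_M` is at distance at most `C ‖a‖^{δ_{s+1}}` from the resonant
block `𝓑^{(s)}_M`, with `C` independent of the point. -/
theorem extended_block_close_to_block (d : ℕ) (δ μ : ℝ) (C D : ℕ → ℝ)
    (hδ0 : 0 < δ) (hδ1 : δ < 1) (hμ : 0 < μ)
    (hμδ : ((d : ℝ) * ((d : ℝ) + 1) / 2) * μ < 1 - δ)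
    (hC1 : C 1 = 1) (hD1 : D 1 = 1)
    (hC : ∀ j : ℕ, 1 ≤ j → j < d → C j < C (j + 1))
    (hD : ∀ j : ℕ, 1 ≤ j → j < d → D j < D (j + 1))
    (s : ℕ) (hsd : s ≤ d)
    (M : Submodule ℤ (Fin d → ℤ)) (hM : IsZMod M) (hdim : dimM M = s) :
    ∃ R₀ : ℝ, 0 < R₀ ∧ ∀ R : ℝ, R₀ ≤ R →
      ∃ K : ℝ, 0 < K ∧ ∀ a ∈ extBlock δ μ C D R d s M,
        ∃ a' ∈ block δ μ C D R s M, nrm (a - a') ≤ K * nrm a ^ deltaS δ μ (s + 1) := by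
  classical
  rcases Nat.eq_zero_or_pos s with hs0 | hs1
  · -- dimension zero : the module is trivial and `a` itself is in the block
    subst hs0
    refine ⟨1, one_pos, fun R hR => ⟨1, one_pos, fun a ha => ?_⟩⟩
    obtain ⟨⟨p, hp, q, hq, haeq⟩, -⟩ := extBlock_subsetA δ μ C D R 0 M ha
    have hbot : MrealSet M = ⊥ := by
      have h0 : Module.finrank ℝ (MrealSet M) = 0 := hdim
      exact Submodule.finrank_eq_zero.mp h0
    rw [hbot, Submodule.mem_bot] at hq
    subst hq
    rw [add_zero] at haeq
    refine ⟨p, hp, ?_⟩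
    have h0 : nrm (a - p) = 0 := by rw [haeq, sub_self]; simp [nrm]
    rw [h0, one_mul]
    exact Real.rpow_nonneg (nrm_nonneg a) _
  · obtain ⟨t, rfl⟩ : ∃ t, s = t + 1 := ⟨s - 1, by omega⟩
    -- constants
    obtain ⟨Cm, hCmdef⟩ : ∃ y : ℝ, y = 1 + ∑ i ∈ Finset.range (d+1), |C i| := ⟨_, rfl⟩
    obtain ⟨Dm, hDmdef⟩ : ∃ y : ℝ, y = 1 + ∑ i ∈ Finset.range (d+1), |D i| := ⟨_, rfl⟩
    have hCm1 : (1:ℝ) ≤ Cm := hCmdef ▸ cOneA C d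
    have hDm1 : (1:ℝ) ≤ Dm := hDmdef ▸ cOneA D d
    obtain ⟨σ, hσdef⟩ : ∃ y : ℝ, y = deltaS δ μ (t + 1 + 1) := ⟨_, rfl⟩
    have hσ0 : 0 < σ := by
      rw [hσdef]; unfold deltaS; push_cast
      nlinarith [hδ0, mul_nonneg (mul_nonneg
        (by positivity : (0:ℝ) ≤ (t:ℝ)+2) (Nat.cast_nonneg t)) hμ.le]
    have hσ1 : σ < 1 := by
      rw [hσdef]; unfold deltaS
      have hsd' : ((t:ℝ)+1) ≤ (d:ℝ) := by exact_mod_cast hsd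
      have hmul : ((t:ℝ)+2)*((t:ℝ)+1) ≤ ((d:ℝ)+1)*(d:ℝ) :=
        mul_le_mul (by linarith) (by linarith) (by positivity) (by linarith)
      have hmulμ : ((t:ℝ)+2)*((t:ℝ)+1)*μ ≤ ((d:ℝ)+1)*(d:ℝ)*μ :=
        mul_le_mul_of_nonneg_right hmul hμ.le
      push_cast
      nlinarith [hμδ, hmulμ]
    obtain ⟨K2, hK2def⟩ : ∃ y : ℝ, y = ((t:ℝ)+1) * Real.sqrt (Nat.factorial (t+1)) * Cm * Dm ^ (t+1) := ⟨_, rfl⟩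
    have hfac : (0:ℝ) < Real.sqrt (Nat.factorial (t+1)) :=
      Real.sqrt_pos.mpr (by exact_mod_cast Nat.factorial_pos (t+1))
    have hK20 : 0 < K2 := by
      rw [hK2def]
      apply mul_pos (mul_pos (mul_pos (by positivity) hfac) (by linarith))
      exact pow_pos (by linarith) _
    obtain ⟨R₀, hR₀def⟩ : ∃ y : ℝ, y = max 2 ((2*K2) ^ ((1:ℝ)/(1-σ))) := ⟨_, rfl⟩
    have hR₀2 : (2:ℝ) ≤ R₀ := hR₀def ▸ le_max_left _ _
    refine ⟨R₀, by linarith, fun R hRR => ⟨4*K2, by linarith, fun a ha => ?_⟩⟩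
    have hhalf : ∀ u : ℝ, R₀ ≤ u → K2 * u ^ σ ≤ u / 2 := by
      intro u hu
      have hu2 : (2:ℝ) ≤ u := le_trans hR₀2 hu
      have hu0 : (0:ℝ) < u := by linarith
      have h2K2 : (0:ℝ) < 2*K2 := by linarith
      have key : 2*K2 ≤ u ^ (1-σ) := by
        have h1 : (2*K2) ^ ((1:ℝ)/(1-σ)) ≤ u := le_trans (hR₀def ▸ le_max_right 2 ((2*K2) ^ ((1:ℝ)/(1-σ))) : (2*K2) ^ ((1:ℝ)/(1-σ)) ≤ R₀) hu
        have h2 : ((2*K2) ^ ((1:ℝ)/(1-σ))) ^ (1-σ) ≤ u ^ (1-σ) :=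
          Real.rpow_le_rpow (Real.rpow_nonneg h2K2.le _) h1 (by linarith)
        rwa [← Real.rpow_mul h2K2.le, one_div_mul_cancel
          (by linarith : (1:ℝ)-σ ≠ 0), Real.rpow_one] at h2
      have huσ : 0 < u ^ σ := Real.rpow_pos_of_pos hu0 σ
      have hmm : 2*K2 * u^σ ≤ u^(1-σ) * u^σ := mul_le_mul_of_nonneg_right key huσ.le
      rw [← Real.rpow_add hu0, show (1:ℝ)-σ+σ = 1 by ring, Real.rpow_one] at hmm
      linarith
    -- the subspace and the orthogonal projection
    set V : Submodule ℝ (EdA d) := (MrealSet M).map (eLA d).toLinearMap with hVdef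
    -- main projection estimate on the zone
    have hproj : ∀ x : Fin d → ℝ, R₀ ≤ nrm x → x ∈ zone δ μ C D R (t+1) M →
        ‖((Submodule.orthogonalProjectionOnto V (eLA d x)) : EdA d)‖ ≤ K2 * nrm x ^ σ := by
      intro x hxR hxz
      have hx1 : (1:ℝ) ≤ nrm x := by linarith [le_trans hR₀2 hxR]
      have hx0 : (0:ℝ) < nrm x := by linarith
      unfold zone at hxz
      rw [if_neg (by omega : ¬(t + 1 = 0))] at hxz
      simp only [Set.mem_setOf_eq] at hxz
      obtain ⟨hRx, k, hkM, hkli, hkprop⟩ := hxz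
      have hkliE : LinearIndependent ℝ fun j => eLA d (zr (k j)) := by
        simpa [Function.comp_def] using
          hkli.map' (eLA d).toLinearMap (LinearEquiv.ker (eLA d))
      have hspan : Submodule.span ℝ (Set.range fun j => zr (k j)) = MrealSet M :=
        span_eqA M hdim k hkM hkli
      have hVspan : V = Submodule.span ℝ (Set.range fun j => eLA d (zr (k j))) := by
        rw [hVdef, ← hspan, Submodule.map_span]
        congr 1
        rw [← Set.range_comp]
        rfl
      set Px : EdA d := ((Submodule.orthogonalProjectionOnto V (eLA d x)) : EdA d) with hPxdef
      have hPxV : Px ∈ V := SetLike.coe_mem _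
      have hPinner : ∀ j, inner (𝕜 := ℝ) Px (eLA d (zr (k j))) = dotR x (zr (k j)) := by
        intro j
        have hwV : eLA d (zr (k j)) ∈ V := by
          rw [hVspan]; exact Submodule.subset_span ⟨j, rfl⟩
        have h0 := Submodule.starProjection_inner_eq_zero (K := V) (eLA d x)
          (eLA d (zr (k j))) hwV
        rw [Submodule.starProjection_apply] at h0
        rw [inner_sub_left, sub_eq_zero] at h0
        rw [hPxdef, ← h0, ← dot_eqA]
      obtain ⟨B, hBdef⟩ : ∃ y : ℝ, y = Dm * nrm x ^ μ := ⟨_, rfl⟩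
      have hxμ1 : (1:ℝ) ≤ nrm x ^ μ := by
        calc (1:ℝ) = nrm x ^ (0:ℝ) := (Real.rpow_zero _).symm
          _ ≤ nrm x ^ μ := Real.rpow_le_rpow_of_exponent_le hx1 hμ.le
      have hB1 : (1:ℝ) ≤ B := by rw [hBdef]; nlinarith
      have hkB' : ∀ j, nrm (zr (k j)) ≤ B := by
        intro j
        rw [hBdef]
        calc nrm (zr (k j)) ≤ D ((j:ℕ)+1) * nrm x ^ μ := (hkprop j).2
          _ ≤ Dm * nrm x ^ μ := mul_le_mul_of_nonneg_right
              (by rw [hDmdef]; exact cBoundA D d _ (by have := j.isLt; omega))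
              (Real.rpow_nonneg (nrm_nonneg x) μ)
      have hkB : ∀ j, ‖eLA d (zr (k j))‖ ≤ B := fun j => by
        rw [← nrm_eqA]; exact hkB' j
      obtain ⟨β, hβdef⟩ : ∃ y : ℝ, y = Cm * B * nrm x ^ deltaS δ μ (t+1) := ⟨_, rfl⟩
      have hβ0 : 0 ≤ β := by
        rw [hβdef]
        exact mul_nonneg (mul_nonneg (by linarith) (by linarith))
          (Real.rpow_nonneg (nrm_nonneg x) _)
      have hbβ : ∀ j, |inner (𝕜 := ℝ) Px (eLA d (zr (k j)))| ≤ β := by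
        intro j
        rw [hPinner j, hβdef]
        calc |dotR x (zr (k j))|
            ≤ C ((j:ℕ)+1) * nrm (zr (k j)) * nrm x ^ deltaS δ μ ((j:ℕ)+1) := (hkprop j).1
          _ ≤ Cm * B * nrm x ^ deltaS δ μ (t+1) := by
              have h1 : C ((j:ℕ)+1) * nrm (zr (k j)) ≤ Cm * B := by
                exact mul_le_mul
                  (by rw [hCmdef]; exact cBoundA C d _ (by have := j.isLt; omega))
                  (hkB' j) (nrm_nonneg _) (by linarith)
              have h2 : nrm x ^ deltaS δ μ ((j:ℕ)+1) ≤ nrm x ^ deltaS δ μ (t+1) :=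
                Real.rpow_le_rpow_of_exponent_le hx1
                  (deltaS_monoA δ μ hμ.le (by omega) (by have := j.isLt; omega))
              exact mul_le_mul h1 h2 (Real.rpow_nonneg (nrm_nonneg x) _) (by nlinarith)
      have hPspan : Px ∈ Submodule.span ℝ (Set.range fun j => eLA d (zr (k j))) := by
        rw [← hVspan]; exact hPxV
      have hkey := gram_keyA k hkliE Px hPspan B β hB1 hβ0 hkB hbβ
      obtain ⟨T, hTdef⟩ : ∃ y : ℝ, y = ((t+1:ℕ):ℝ) * Real.sqrt (Nat.factorial (t+1)) * B ^ t * β := ⟨_, rfl⟩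
      have hT0 : 0 ≤ T := by
        rw [hTdef]
        apply mul_nonneg (mul_nonneg (mul_nonneg (by positivity) hfac.le) _) hβ0
        positivity
      have hT2 : ‖Px‖ ^ 2 ≤ T ^ 2 := by
        refine le_trans hkey (le_of_eq ?_)
        rw [hTdef]
        have hsq : Real.sqrt (Nat.factorial (t+1)) ^ 2 = (Nat.factorial (t+1) : ℝ) :=
          Real.sq_sqrt (Nat.cast_nonneg _)
        rw [show 2*(t+1-1) = t*2 by omega, pow_mul, mul_pow, mul_pow, mul_pow, hsq]
      have hnorm : ‖Px‖ ≤ T := by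
        have hs := Real.sqrt_le_sqrt hT2
        rwa [Real.sqrt_sq (norm_nonneg _), Real.sqrt_sq hT0] at hs
      refine le_trans hnorm (le_of_eq ?_)
      rw [hTdef, hβdef, hBdef, hK2def, hσdef]
      have hpow : ((nrm x ^ μ) ^ t) * ((nrm x ^ μ) * nrm x ^ deltaS δ μ (t+1))
          = nrm x ^ deltaS δ μ (t+1+1) := by
        rw [← Real.rpow_natCast (nrm x ^ μ) t, ← Real.rpow_mul (nrm_nonneg x),
          ← Real.rpow_add hx0, ← Real.rpow_add hx0]
        congr 1
        unfold deltaS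
        push_cast
        ring
      rw [← hpow, mul_pow]
      push_cast
      ring
    -- unpack the extended-block membership
    obtain ⟨⟨p, hp, q, hq, haeq⟩, haz⟩ := extBlock_subsetA δ μ C D R (t+1) M ha
    have hpz : p ∈ zone δ μ C D R (t+1) M := block_subset_zoneA δ μ C D R (t+1) hsd M hp
    have hzR : ∀ y, y ∈ zone δ μ C D R (t+1) M → R ≤ nrm y := by
      intro y hy
      unfold zone at hy
      rw [if_neg (by omega : ¬(t + 1 = 0))] at hy
      exact hy.1
    have haR : R₀ ≤ nrm a := le_trans hRR (hzR a haz)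
    have hpR : R₀ ≤ nrm p := le_trans hRR (hzR p hpz)
    have hprojA := hproj a haR haz
    have hprojP := hproj p hpR hpz
    have hapq : a - p = q := by rw [haeq, add_sub_cancel_left]
    have hqV : eLA d a - eLA d p ∈ V := by
      rw [← map_sub (eLA d) a p, hapq, hVdef]
      exact Submodule.mem_map_of_mem hq
    have hPq : ((Submodule.orthogonalProjectionOnto V (eLA d a)) : EdA d)
        - ((Submodule.orthogonalProjectionOnto V (eLA d p)) : EdA d) = eLA d a - eLA d p := by
      have h1 : ((Submodule.orthogonalProjectionOnto V (eLA d a - eLA d p)) : EdA d)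
          = eLA d a - eLA d p := (Submodule.starProjection_eq_self_iff (K := V)).mpr hqV
      have h2 : Submodule.orthogonalProjectionOnto V (eLA d a - eLA d p)
          = Submodule.orthogonalProjectionOnto V (eLA d a) - Submodule.orthogonalProjectionOnto V (eLA d p) :=
        map_sub _ _ _
      rw [← h1, h2, Submodule.coe_sub]
    have hdist : nrm (a - p) ≤ K2 * nrm a ^ σ + K2 * nrm p ^ σ := by
      have he : nrm (a - p) = ‖eLA d a - eLA d p‖ := by rw [nrm_eqA, map_sub]
      rw [he, ← hPq]
      exact le_trans (norm_sub_le _ _) (add_le_add hprojA hprojP)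
    have hhalfa : K2 * nrm a ^ σ ≤ nrm a / 2 := hhalf (nrm a) haR
    have hhalfp : K2 * nrm p ^ σ ≤ nrm p / 2 := hhalf (nrm p) hpR
    have hpa : nrm p ≤ 3 * nrm a := by
      have h1 : nrm p ≤ nrm a + nrm (a - p) := by
        rw [nrm_eqA p, nrm_eqA a, nrm_eqA (a - p), map_sub]
        calc ‖eLA d p‖ = ‖eLA d a - (eLA d a - eLA d p)‖ := by rw [sub_sub_cancel]
          _ ≤ ‖eLA d a‖ + ‖eLA d a - eLA d p‖ := norm_sub_le _ _
      linarith
    have hpσ : nrm p ^ σ ≤ 3 * nrm a ^ σ := by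
      calc nrm p ^ σ ≤ (3 * nrm a) ^ σ :=
            Real.rpow_le_rpow (nrm_nonneg p) hpa hσ0.le
        _ = 3 ^ σ * nrm a ^ σ := Real.mul_rpow (by norm_num) (nrm_nonneg a)
        _ ≤ 3 * nrm a ^ σ := by
            have h3 : (3:ℝ) ^ σ ≤ 3 := by
              calc (3:ℝ) ^ σ ≤ 3 ^ (1:ℝ) :=
                    Real.rpow_le_rpow_of_exponent_le (by norm_num) hσ1.le
                _ = 3 := Real.rpow_one 3
            exact mul_le_mul_of_nonneg_right h3 (Real.rpow_nonneg (nrm_nonneg a) σ)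
    refine ⟨p, hp, ?_⟩
    calc nrm (a - p) ≤ K2 * nrm a ^ σ + K2 * nrm p ^ σ := hdist
      _ ≤ K2 * nrm a ^ σ + K2 * (3 * nrm a ^ σ) := by nlinarith
      _ = 4 * K2 * nrm a ^ σ := by ring
      _ = 4 * K2 * nrm a ^ deltaS δ μ (t + 1 + 1) := by rw [hσdef]
end
end
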